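/- Let s_0, s_1, s_2 be the 3-hyperbolic functions. Then the addition formulas hold for all z, w ∈ ℂ: s_0(z+w) = s_0(z)s_0(w) + s_1(z)s_2(w) + s_2(z)s_1(w); s_1(z+w) = s_0(z)s_1(w) + s_1(z)s_0(w) + s_2(z)s_2(w); s_2(z+w) = s_0(z)s_2(w) + s_1(z)s_1(w) + s_2(z)s_0(w). -/

import Mathlib

open Complex Finset

noncomputable def zeta3 : ℂ := Complex.exp (2 * Real.pi * Complex.I / 3)

noncomputable def s3 (k : ℕ) (z : ℂ) : ℂ :=
  (1 / 3) * ∑ m ∈ Finset.range 3, ((zeta3 ^ m)⁻¹) ^ k * Complex.exp (z * zeta3 ^ m)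

/-! The `s3 k` are the discrete Fourier coefficients of `m ↦ exp (z ζ^m)` over `ℤ/3`, so
Fourier inversion gives `exp (z ζ^m) = ∑ j, ζ^(m j) s3 j z`. Multiplying the expansions for `z`
and `w` and applying orthogonality of the characters `m ↦ ζ^(m a)` shows that `s3 k (z + w)`
collects exactly the products `s3 i z * s3 j w` with `i + j ≡ k (mod 3)`. -/

theorem IsPrimitiveRoot.sum_pow_mul_eq_ite {R : Type*} [CommRing R] [IsDomain R] {ζ : R}
    {n : ℕ} (hζ : IsPrimitiveRoot ζ n) (a : ℕ) :
    ∑ m ∈ range n, ζ ^ (m * a) = if n ∣ a then (n : R) else 0 := by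
  simp_rw [mul_comm _ a, pow_mul]
  split_ifs with h
  · simp [(hζ.pow_eq_one_iff_dvd a).mpr h]
  · have hne : ζ ^ a - 1 ≠ 0 := sub_ne_zero.mpr (mt (hζ.pow_eq_one_iff_dvd a).mp h)
    refine eq_zero_of_ne_zero_of_mul_right_eq_zero hne ?_
    rw [geom_sum_mul, ← pow_mul, mul_comm, pow_mul, hζ.pow_eq_one, one_pow, sub_self]

theorem zeta3_isPrimitiveRoot : IsPrimitiveRoot zeta3 3 := by
  simpa [zeta3] using Complex.isPrimitiveRoot_exp 3 (by norm_num)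

theorem inv_zeta3_pow_pow (m k : ℕ) : (zeta3 ^ m)⁻¹ ^ k = zeta3 ^ (m * (2 * k)) := by
  rw [pow_mul, pow_mul, ← pow_mul zeta3 m 2]
  congr 1
  refine inv_eq_of_mul_eq_one_right ?_
  rw [← pow_add, ← mul_one_add, mul_comm, pow_mul, zeta3_isPrimitiveRoot.pow_eq_one, one_pow]

theorem s3_eq_sum (k : ℕ) (z : ℂ) :
    s3 k z = (1 / 3) * ∑ m ∈ range 3, zeta3 ^ (m * (2 * k)) * exp (z * zeta3 ^ m) := by
  simp only [s3, inv_zeta3_pow_pow]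

theorem exp_mul_zeta3_pow {m : ℕ} (hm : m < 3) (z : ℂ) :
    exp (z * zeta3 ^ m) = ∑ j ∈ range 3, zeta3 ^ (m * j) * s3 j z := by
  simp_rw [s3_eq_sum, mul_sum]
  rw [sum_comm]
  have key : ∀ l ∈ range 3, ∑ j ∈ range 3, zeta3 ^ (m * j) * (1 / 3 *
      (zeta3 ^ (l * (2 * j)) * exp (z * zeta3 ^ l))) = if l = m then exp (z * zeta3 ^ m) else 0 := by
    intro l hl
    have hl3 : l < 3 := mem_range.mp hl
    calc _ = 1 / 3 * exp (z * zeta3 ^ l) * ∑ j ∈ range 3, zeta3 ^ (j * (m + 2 * l)) := by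
          rw [mul_sum]
          refine sum_congr rfl fun j _ => ?_
          ring
      _ = _ := by
          rw [zeta3_isPrimitiveRoot.sum_pow_mul_eq_ite]
          by_cases h : l = m
          · subst h
            rw [if_pos (by omega), if_pos rfl]
            push_cast
            ring
          · rw [if_neg (by omega), if_neg h, mul_zero]
  rw [sum_congr rfl key, sum_ite_eq' (range 3) m, if_pos (mem_range.mpr hm)]

-- `2 * k` stands for `-k` modulo 3, because `(ζ ^ m)⁻¹ = ζ ^ (2 * m)`.
theorem s3_add (k : ℕ) (z w : ℂ) :
    s3 k (z + w) = ∑ i ∈ range 3, ∑ j ∈ range 3,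
      if 3 ∣ 2 * k + i + j then s3 i z * s3 j w else 0 := by
  have hexp : ∀ m ∈ range 3, exp ((z + w) * zeta3 ^ m) =
      (∑ i ∈ range 3, zeta3 ^ (m * i) * s3 i z) * ∑ j ∈ range 3, zeta3 ^ (m * j) * s3 j w := by
    intro m hm
    rw [add_mul, exp_add, exp_mul_zeta3_pow (mem_range.mp hm), exp_mul_zeta3_pow (mem_range.mp hm)]
  calc s3 k (z + w)
      = ∑ i ∈ range 3, ∑ j ∈ range 3, s3 i z * s3 j w *
          (1 / 3 * ∑ m ∈ range 3, zeta3 ^ (m * (2 * k + i + j))) := by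
        rw [s3_eq_sum, sum_congr rfl fun m hm => by rw [hexp m hm]]
        simp only [mul_sum, sum_mul]
        conv_rhs => rw [sum_comm]
        rw [sum_comm]
        refine sum_congr rfl fun j _ => ?_
        rw [sum_comm]
        exact sum_congr rfl fun i _ => sum_congr rfl fun m _ => by ring
    _ = _ := by
        simp only [zeta3_isPrimitiveRoot.sum_pow_mul_eq_ite]
        refine sum_congr rfl fun i _ => sum_congr rfl fun j _ => ?_
        split_ifs <;> push_cast <;> ring

theorem s3_addition_formulas (z w : ℂ) :
    s3 0 (z + w) = s3 0 z * s3 0 w + s3 1 z * s3 2 w + s3 2 z * s3 1 w ∧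
    s3 1 (z + w) = s3 0 z * s3 1 w + s3 1 z * s3 0 w + s3 2 z * s3 2 w ∧
    s3 2 (z + w) = s3 0 z * s3 2 w + s3 1 z * s3 1 w + s3 2 z * s3 0 w := by
  refine ⟨?_, ?_, ?_⟩ <;> simp [s3_add, sum_range_succ]
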